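/- Let c_1,…,c_n be reals with c_1 = 0 and c_n = 1, and let d_1,…,d_n be reals with d_1 = d_n = 1 and d_i ≠ 0 for all i. Set A = F·D, Ã = T·(D·A·G)ᵀ·T, C = diag(c_1,…,c_n), and C̃ = I − T·C·T. Then for every integer k ≥ 1, Tr(P·Ã^k·C̃) = Tr(P·A^k·C); that is, the tall-tree quantities Tr(P·A^k·C) are conserved by the c-reflection transformation. -/

import Mathlib

open Finset Matrix
/-- The matrix `D` with entries `d_{ij}`: `0` for `i < j`, `d_i` for `i = j`, and
`-d_j · (∏_{k=j+1}^{i-1} (1 - d_k)) · d_i` for `i > j`. -/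
def Dmat (n : ℕ) (d : Fin n → ℝ) : Matrix (Fin n) (Fin n) ℝ :=
  Matrix.of fun i j =>
    if i < j then 0
    else if i = j then d i
    else -(d j) * (∏ k ∈ Finset.Ioo j i, (1 - d k)) * d i

/-- The lower-triangular matrix `G` with `G_{ii} = 1/d_i`, `G_{ij} = 1` for `i > j`. -/
noncomputable def Gmat (n : ℕ) (d : Fin n → ℝ) : Matrix (Fin n) (Fin n) ℝ :=
  Matrix.of fun i j => if i = j then 1 / d i else if j < i then 1 else 0

/-- The matrix `F` with `F_{ij} = c_i - c_j` for `i > j` and `0` otherwise. -/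
def Fmat (n : ℕ) (c : Fin n → ℝ) : Matrix (Fin n) (Fin n) ℝ :=
  Matrix.of fun i j => if j < i then c i - c j else 0

/-- The antidiagonal permutation matrix `T`, `T_{ij} = 1` iff `i + j = n + 1` (1-based). -/
def Tmat (n : ℕ) : Matrix (Fin n) (Fin n) ℝ :=
  Matrix.of fun i j => if (i : ℕ) + (j : ℕ) + 1 = n then 1 else 0

/-- The matrix `P` whose last column consists of ones and all other entries are `0`. -/
def Pmat (n : ℕ) : Matrix (Fin n) (Fin n) ℝ :=
  Matrix.of fun _ j => if (j : ℕ) + 1 = n then 1 else 0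

/-! Conjugating by `T` reverses both indices, and `Tr(P·X)` is the sum of the last row of `X`.
Since `G·D = 1`, `Ã^k = T·(D·A^k·G)ᵀ·T` and `C̃ = T·(I - C)·T`, so the left side is the sum of the
first row of `(D·A^k·G)ᵀ·(I - C)`, i.e. `(1 - c)ᵀ·D·A^k·G·e₁`. The boundary values make everything
collapse: `d₁ = 1` gives `G·e₁ = 𝟙` and hence `D·𝟙 = e₁`, so `c₁ = 0` gives `A·𝟙 = F·e₁ = c = C·𝟙`,
while `c_n = 1` makes the last row of `F` equal to `(1 - c)ᵀ`. Both sides are therefore the last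
entry of `A^(k+1)·𝟙`. -/

lemma Matrix.conj_pow_of_mul_eq_one {ι R : Type*} [Fintype ι] [DecidableEq ι] [CommRing R]
    {P Q : Matrix ι ι R} (h : Q * P = 1) (M : Matrix ι ι R) (k : ℕ) :
    (P * M * Q) ^ k = P * M ^ k * Q :=
  Units.conj_pow ⟨P, Q, mul_eq_one_comm.mp h, h⟩ M k

lemma Matrix.diagonal_mulVec_one {ι R : Type*} [Fintype ι] [DecidableEq ι] [NonAssocSemiring R]
    (v : ι → R) : diagonal v *ᵥ 1 = v := by
  ext i
  simp [mulVec_diagonal]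

section Reversal

variable {n : ℕ}

lemma Tmat_mul (M : Matrix (Fin n) (Fin n) ℝ) : Tmat n * M = M.submatrix Fin.revPerm id := by
  ext i j
  have h (k : Fin n) : ((i : ℕ) + k + 1 = n) ↔ k = i.rev := by rw [Fin.ext_iff, Fin.val_rev]; omega
  simp [Tmat, mul_apply, h]

lemma mul_Tmat (M : Matrix (Fin n) (Fin n) ℝ) : M * Tmat n = M.submatrix id Fin.revPerm := by
  ext i j
  have h (k : Fin n) : ((k : ℕ) + j + 1 = n) ↔ k = j.rev := by rw [Fin.ext_iff, Fin.val_rev]; omega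
  simp [Tmat, mul_apply, h]

lemma Tmat_mul_Tmat : Tmat n * Tmat n = 1 := by
  rw [Tmat_mul, ← Matrix.one_mul (Tmat n), mul_Tmat]
  ext i j
  simp [one_apply]

lemma Tmat_mul_mul_Tmat (M : Matrix (Fin n) (Fin n) ℝ) :
    Tmat n * M * Tmat n = M.submatrix Fin.revPerm Fin.revPerm := by
  rw [Tmat_mul, mul_Tmat]
  rfl

end Reversal

lemma trace_Pmat_mul {n : ℕ} (X : Matrix (Fin (n + 1)) (Fin (n + 1)) ℝ) :
    trace (Pmat (n + 1) * X) = (X *ᵥ 1) (Fin.last n) := by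
  have h (j : Fin (n + 1)) : (j : ℕ) = n ↔ j = Fin.last n := by rw [Fin.ext_iff, Fin.val_last]
  simp [trace, Pmat, mul_apply, mulVec, dotProduct, h]

lemma trace_Pmat_mul_submatrix_rev {n : ℕ} (X : Matrix (Fin (n + 1)) (Fin (n + 1)) ℝ) :
    trace (Pmat (n + 1) * X.submatrix Fin.revPerm Fin.revPerm) = (X *ᵥ 1) 0 := by
  rw [trace_Pmat_mul, submatrix_mulVec_equiv]
  simp

section Triangular

variable {n : ℕ} (d : Fin n → ℝ)

lemma Dmat_of_lt {k j : Fin n} (h : k < j) : Dmat n d k j = 0 := by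
  simp [Dmat, h]

lemma Dmat_self (i : Fin n) : Dmat n d i i = d i := by
  simp [Dmat]

lemma Dmat_of_gt {i j : Fin n} (h : j < i) :
    Dmat n d i j = -d j * (∏ k ∈ Ioo j i, (1 - d k)) * d i := by
  simp [Dmat, h.not_gt, h.ne']

lemma sum_Iio_Dmat_of_lt {i j : Fin n} (hji : j < i) :
    ∑ k ∈ Iio i, Dmat n d k j = d j * ∏ k ∈ Ioo j i, (1 - d k) := by
  have hIco : Ico j i ⊆ Iio i := fun k hk => by simp_all
  have hcol : ∀ k ∈ Iio i, k ∉ Ico j i → Dmat n d k j = 0 := fun k _ hk =>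
    Dmat_of_lt d (by simp_all)
  rw [← sum_subset hIco hcol, ← Ioo_insert_left hji,
    sum_insert (by simp), prod_one_sub_ordered, Dmat_self, mul_sub, mul_one, mul_sum,
    sub_eq_add_neg, ← sum_neg_distrib]
  congr 1
  refine sum_congr rfl fun k hk => ?_
  rw [mem_Ioo] at hk
  have hfilter : (Ioo j i).filter (· < k) = Ioo j k := by
    ext l
    simp only [mem_filter, mem_Ioo]
    exact ⟨fun h => ⟨h.1.1, h.2⟩, fun h => ⟨⟨h.1, h.2.trans hk.2⟩, h.2⟩⟩
  rw [Dmat_of_gt d hk.1, hfilter]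
  ring

lemma Gmat_mul_Dmat (hd : ∀ i, d i ≠ 0) : Gmat n d * Dmat n d = 1 := by
  ext i j
  have hG (k : Fin n) : Gmat n d i k = (if k < i then 1 else 0) + if k = i then 1 / d i else 0 := by
    rcases lt_trichotomy k i with h | rfl | h
    · simp [Gmat, h, h.ne, h.ne']
    · simp [Gmat]
    · simp [Gmat, h.ne, h.ne', h.not_gt]
  simp only [mul_apply, hG, add_mul, sum_add_distrib, ite_mul, one_mul, zero_mul, sum_ite_eq',
    mem_univ, if_true, ← sum_filter, filter_gt_eq_Iio, one_apply]
  rcases lt_trichotomy j i with h | rfl | h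
  · rw [sum_Iio_Dmat_of_lt d h, Dmat_of_gt d h, if_neg h.ne']
    field_simp [hd i]
    ring
  · rw [sum_eq_zero fun k hk => Dmat_of_lt d (mem_Iio.mp hk), Dmat_self, if_pos rfl]
    simp [hd j]
  · rw [sum_eq_zero fun k hk => Dmat_of_lt d ((mem_Iio.mp hk).trans h), Dmat_of_lt d h,
      if_neg h.ne]
    simp

end Triangular

section FirstAndLast

variable {n : ℕ}

lemma Gmat_mulVec_single_zero (d : Fin (n + 1) → ℝ) (hd0 : d 0 = 1) :
    Gmat (n + 1) d *ᵥ Pi.single 0 1 = 1 := by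
  ext i
  rcases eq_or_ne i 0 with rfl | hi
  · simp [Gmat, hd0]
  · simp [Gmat, hi, Fin.pos_iff_ne_zero.mpr hi]

lemma Dmat_mulVec_one (d : Fin (n + 1) → ℝ) (hd0 : d 0 = 1) (hd : ∀ i, d i ≠ 0) :
    Dmat (n + 1) d *ᵥ 1 = Pi.single 0 1 := by
  rw [← Gmat_mulVec_single_zero d hd0, mulVec_mulVec, mul_eq_one_comm.mp (Gmat_mul_Dmat d hd),
    one_mulVec]

lemma Fmat_mulVec_single_zero (c : Fin (n + 1) → ℝ) (hc0 : c 0 = 0) :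
    Fmat (n + 1) c *ᵥ Pi.single 0 1 = c := by
  ext i
  rcases eq_or_ne i 0 with rfl | hi
  · simp [Fmat, hc0]
  · simp [Fmat, hc0, Fin.pos_iff_ne_zero.mpr hi]

lemma Fmat_last (c : Fin (n + 1) → ℝ) (hc : c (Fin.last n) = 1) :
    Fmat (n + 1) c (Fin.last n) = 1 - c := by
  ext j
  rcases eq_or_ne j (Fin.last n) with rfl | hj
  · simp [Fmat, hc]
  · simp [Fmat, hc, Fin.lt_last_iff_ne_last.mpr hj]

end FirstAndLast

theorem stmt_13 (n : ℕ) (hn : 2 ≤ n) (c d : Fin n → ℝ)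
    (hc1 : c ⟨0, by omega⟩ = 0) (hcn : c ⟨n - 1, by omega⟩ = 1)
    (hd1 : d ⟨0, by omega⟩ = 1)
    (hd : ∀ i : Fin n, d i ≠ 0)
    (A Atil C Ctil : Matrix (Fin n) (Fin n) ℝ)
    (hA : A = Fmat n c * Dmat n d)
    (hAtil : Atil = Tmat n * (Dmat n d * A * Gmat n d)ᵀ * Tmat n)
    (hC : C = Matrix.diagonal c)
    (hCtil : Ctil = 1 - Tmat n * C * Tmat n) :
    ∀ k : ℕ, 1 ≤ k →
      Matrix.trace (Pmat n * Atil ^ k * Ctil) =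
        Matrix.trace (Pmat n * A ^ k * C) := by
  intro k _
  obtain ⟨m, rfl⟩ : ∃ m, n = m + 1 := ⟨n - 1, by omega⟩
  have hGD := Gmat_mul_Dmat d hd
  have hA1 : A *ᵥ 1 = c := by
    rw [hA, ← mulVec_mulVec, Dmat_mulVec_one d hd1 hd, Fmat_mulVec_single_zero c hc1]
  set B := Dmat (m + 1) d * A ^ k * Gmat (m + 1) d
  have hAtil_pow : Atil ^ k = Tmat (m + 1) * Bᵀ * Tmat (m + 1) := by
    rw [hAtil, conj_pow_of_mul_eq_one Tmat_mul_Tmat, ← transpose_pow,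
      conj_pow_of_mul_eq_one hGD]
  have hCtil' : Ctil = Tmat (m + 1) * (1 - C) * Tmat (m + 1) := by
    rw [hCtil, mul_sub, sub_mul, mul_one, Tmat_mul_Tmat]
  calc trace (Pmat (m + 1) * Atil ^ k * Ctil)
      = ((Bᵀ * (1 - C)) *ᵥ 1) 0 := by
        rw [mul_assoc, hAtil_pow, hCtil', Tmat_mul_mul_Tmat, Tmat_mul_mul_Tmat,
          submatrix_mul_equiv, trace_Pmat_mul_submatrix_rev]
    _ = (Fmat (m + 1) c (Fin.last m) ᵥ* B) 0 := by
        rw [← mulVec_mulVec, hC, sub_mulVec, one_mulVec, diagonal_mulVec_one, mulVec_transpose,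
          Fmat_last c hcn]
    _ = (A ^ (k + 1) * Gmat (m + 1) d) (Fin.last m) 0 := by
        rw [← mul_apply_eq_vecMul]
        simp only [B, pow_succ', hA, mul_assoc]
    _ = (A ^ (k + 1) *ᵥ 1) (Fin.last m) := by
        rw [← Gmat_mulVec_single_zero d hd1, mulVec_mulVec, mulVec_single_one]
        rfl
    _ = trace (Pmat (m + 1) * A ^ k * C) := by
        rw [mul_assoc, trace_Pmat_mul, ← mulVec_mulVec, hC, diagonal_mulVec_one, ← hA1,
          mulVec_mulVec, ← pow_succ]
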